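/- arXiv:1302.1012 — 5 statements merged into one kernel-verified Lean document; each statement's English description precedes it below -/
import Mathlib

section
/- Let A be a commutative Hopf algebra over ℝ that is finitely generated as an ℝ-algebra, and suppose that ℂ ⊗_ℝ A is an integral domain. Then A is a formally real ring: whenever a finite sum of squares of elements of A equals zero, each of those elements is zero. -/
/-!
The counit `ε : A → ℝ` is a real point of the group; let `m = ker ε`. Left-invariant vector
fields `a ↦ a₍₁₎ ξ(a₍₂₎)` realise every tangent vector `ξ ∈ (m/m²)^*` as a derivation `D` of `A`
with `ε ∘ D = ξ`. Together with lifts `eⱼ ∈ m` of a basis of `m/m²` they give Euler's identity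
`k f ≡ ∑ eⱼ Dⱼ f (mod m^(k+1))` for `f ∈ m^k`, so `f ∈ m^d` lies in `m^(d+1)` as soon as
`ε(D^d f) = 0` for every `D` in the span of the `Dⱼ` (after polarisation).

If `∑ fᵢ² = 0` with all `fᵢ ∈ m^d`, applying `ε ∘ D^(2d)` and the Leibniz rule gives
`∑ᵢ (2d choose d) ε(D^d fᵢ)² = 0`, hence `ε(D^d fᵢ) = 0` and all `fᵢ ∈ m^(d+1)`. Thus the `fᵢ`
lie in `⋂ m^d`, which vanishes by Krull's intersection theorem: `A` is a Noetherian domain,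
being a subring of `ℂ ⊗ A`.
-/

open Finset TensorProduct

section Polynomial

open Polynomial

variable {K R : Type*} [CommRing K] [Ring R] [Algebra K R] (a b : R)

theorem Polynomial.coeff_zero_C_add_C_mul_X_pow (n : ℕ) :
    ((C a + C b * X) ^ n).coeff 0 = a ^ n := by
  rw [← constantCoeff_apply, map_pow]
  simp

theorem Polynomial.coeff_one_C_add_C_mul_X_pow_succ (n : ℕ) :
    ((C a + C b * X) ^ (n + 1)).coeff 1 = a * ((C a + C b * X) ^ n).coeff 1 + b * a ^ n := by
  rw [pow_succ', coeff_mul, Nat.antidiagonal_succ]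
  simp [coeff_zero_C_add_C_mul_X_pow]

theorem Polynomial.add_smul_pow_eq_sum_range_coeff (s : K) (n : ℕ) {N : ℕ}
    (hN : ((C a + C b * X) ^ n).natDegree < N) :
    (a + s • b) ^ n = ∑ i ∈ range N, s ^ i • ((C a + C b * X) ^ n).coeff i := by
  have hev : (C a + C b * X).eval₂ (RingHom.id R) (algebraMap K R s) = a + s • b := by
    simp [Algebra.smul_def, Algebra.commutes]
  rw [← hev, ← eval₂RingHom'_apply _ _ (Algebra.commute_algebraMap_right s), ← map_pow,
    eval₂RingHom'_apply, eval₂_eq_sum_range' _ hN]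
  simp only [RingHom.id_apply, ← map_pow, Algebra.smul_def, Algebra.commutes]

theorem eq_zero_of_forall_sum_range_mul_pow_eq_zero {F : Type*} [Field F] [Infinite F]
    {c : ℕ → F} {N : ℕ} (h : ∀ s : F, ∑ i ∈ range N, c i * s ^ i = 0) {i : ℕ} (hi : i < N) :
    c i = 0 := by
  have hq : ∑ j ∈ range N, C (c j) * X ^ j = 0 :=
    Polynomial.funext fun s => by simpa [eval_finsetSum] using h s
  simpa [finsetSum_coeff, coeff_C_mul_X_pow, hi] using congrArg (coeff · i) hq

end Polynomial

namespace Derivation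

section CommRing

variable {R A : Type*} [CommRing R] [CommRing A] [Algebra R A] (D : Derivation R A A)

theorem iterate_apply_mul (n : ℕ) (a b : A) :
    D^[n] (a * b) = ∑ ij ∈ antidiagonal n, n.choose ij.1 • (D^[ij.1] a * D^[ij.2] b) := by
  induction n with
  | zero => simp
  | succ n ih =>
    rw [sum_antidiagonal_choose_succ_nsmul (M := A) (fun i j => D^[i] a * D^[j] b) n]
    simp only [Function.iterate_succ_apply', ih, map_sum, map_nsmul, leibniz, smul_eq_mul,
      smul_add, sum_add_distrib]
    congr 1
    refine sum_congr rfl fun ⟨i, j⟩ hij => ?_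
    rw [n.choose_symm_of_eq_add (HasAntidiagonal.mem_antidiagonal.1 hij).symm]
    ring

variable {I : Ideal A}

theorem apply_mem_pow_pred {k : ℕ} {a : A} (ha : a ∈ I ^ k) : D a ∈ I ^ (k - 1) := by
  induction k generalizing a with
  | zero => simp [Ideal.one_eq_top]
  | succ k ih =>
    rw [pow_succ] at ha
    refine Submodule.mul_induction_on ha (fun x hx y hy => ?_) (fun x y hx hy => ?_)
    · rw [leibniz, smul_eq_mul, smul_eq_mul]
      refine Ideal.add_mem _ (Ideal.mul_mem_right _ _ hx) ?_
      rcases k with _ | k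
      · simp
      · simpa [pow_succ'] using Ideal.mul_mem_mul hy (ih hx)
    · rw [map_add]
      exact Ideal.add_mem _ hx hy

theorem iterate_apply_mem_pow {k : ℕ} {a : A} (ha : a ∈ I ^ k) (n : ℕ) :
    D^[n] a ∈ I ^ (k - n) := by
  induction n with
  | zero => simpa using ha
  | succ n ih =>
    rw [Function.iterate_succ_apply', ← Nat.sub_sub]
    exact D.apply_mem_pow_pred ih

theorem apply_iterate_sub_iterate_apply_mem_pow (P : Derivation R A A) {k : ℕ} {a : A}
    (ha : a ∈ I ^ k) (n : ℕ) : D (P^[n] a) - P^[n] (D a) ∈ I ^ (k - n) := by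
  induction n with
  | zero => simp
  | succ n ih =>
    have hcomm : D (P (P^[n] a)) - P (D (P^[n] a)) ∈ I ^ (k - (n + 1)) := by
      rw [← commutator_apply, ← Nat.sub_sub]
      exact ⁅D, P⁆.apply_mem_pow_pred (P.iterate_apply_mem_pow ha n)
    have hP : P (D (P^[n] a) - P^[n] (D a)) ∈ I ^ (k - (n + 1)) := by
      rw [← Nat.sub_sub]
      exact P.apply_mem_pow_pred ih
    simpa [Function.iterate_succ_apply', map_sub] using Ideal.add_mem _ hcomm hP

open Polynomial in
theorem coeff_one_pow_succ_apply_sub_mem_pow (P Q : Derivation R A A) {k : ℕ} {g : A}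
    (hg : g ∈ I ^ k) (n : ℕ) :
    ((C (P : Module.End R A) + C (Q : Module.End R A) * X) ^ (n + 1)).coeff 1 g
      - (n + 1) • P^[n] (Q g) ∈ I ^ (k - n) := by
  induction n with
  | zero => simp
  | succ n ih =>
    rw [coeff_one_C_add_C_mul_X_pow_succ]
    have hP := P.apply_mem_pow_pred ih
    rw [Nat.sub_sub] at hP
    convert Ideal.add_mem _ hP (Q.apply_iterate_sub_iterate_apply_mem_pow P hg (n + 1)) using 1
    simp only [LinearMap.add_apply, Module.End.mul_apply, Module.End.coe_pow, coeFn_coe,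
      Function.iterate_succ_apply', map_sub, succ_nsmul, map_add, map_nsmul]
    abel

variable (ε : A →ₐ[R] R)

theorem eval_iterate_eq_zero_of_lt {k n : ℕ} {a : A} (ha : a ∈ RingHom.ker ε ^ k) (hn : n < k) :
    ε (D^[n] a) = 0 :=
  Ideal.pow_le_self (by omega) (D.iterate_apply_mem_pow ha n)

theorem eval_iterate_add_apply_mul {j k : ℕ} {a b : A} (ha : a ∈ RingHom.ker ε ^ j)
    (hb : b ∈ RingHom.ker ε ^ k) :
    ε (D^[j + k] (a * b)) = (j + k).choose j • (ε (D^[j] a) * ε (D^[k] b)) := by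
  rw [iterate_apply_mul, map_sum,
    sum_eq_single_of_mem (j, k) (HasAntidiagonal.mem_antidiagonal.mpr rfl)]
  · simp
  rintro ⟨p, q⟩ hpq hne
  rw [HasAntidiagonal.mem_antidiagonal] at hpq
  rcases lt_or_gt_of_ne (show p ≠ j by rintro rfl; exact hne (Prod.ext rfl (by omega)))
    with hp | hp
  · simp [D.eval_iterate_eq_zero_of_lt ε ha hp]
  · simp [D.eval_iterate_eq_zero_of_lt ε hb (show q < k by omega)]

end CommRing

theorem eval_iterate_eq_zero_of_sum_sq_eq_zero {R A : Type*} [CommRing R] [LinearOrder R]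
    [IsStrictOrderedRing R] [CommRing A] [Algebra R A] (ε : A →ₐ[R] R) (D : Derivation R A A)
    {ι : Type*} [Fintype ι] {f : ι → A} {d : ℕ} (hf : ∀ i, f i ∈ RingHom.ker ε ^ d)
    (hsum : ∑ i, f i ^ 2 = 0) (i : ι) : ε (D^[d] (f i)) = 0 := by
  have hterm : ∀ i, ε (D^[d + d] (f i ^ 2)) = (d + d).choose d • ε (D^[d] (f i)) ^ 2 := by
    intro i
    rw [sq, D.eval_iterate_add_apply_mul ε (hf i) (hf i), sq]
  have hzero : ∑ i, (d + d).choose d • ε (D^[d] (f i)) ^ 2 = 0 := by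
    have h := congrArg (fun a => ε (((D : Module.End R A) ^ (d + d)) a)) hsum
    simpa only [map_sum, map_zero, Module.End.coe_pow, coeFn_coe, hterm] using h
  have hpos : 0 < (d + d).choose d := Nat.choose_pos (by omega)
  rw [sum_eq_zero_iff_of_nonneg fun i _ => by positivity] at hzero
  simpa [hpos.ne'] using hzero i (mem_univ i)

open Polynomial in
/-- Polarisation: `(P + s • Q)^[d+1] f` is a polynomial in `s` whose linear coefficient is
`(d + 1) • P^[d] (Q f)` modulo `ker ε`. -/
theorem eval_iterate_apply_eq_zero_of_forall_eval_iterate_add_smul {K A : Type*} [Field K]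
    [CharZero K] [CommRing A] [Algebra K A] (ε : A →ₐ[K] K) (P Q : Derivation K A A) {d : ℕ}
    {f : A} (hf : f ∈ RingHom.ker ε ^ (d + 1)) (h : ∀ s : K, ε ((P + s • Q)^[d + 1] f) = 0) :
    ε (P^[d] (Q f)) = 0 := by
  set p := (C (P : Module.End K A) + C (Q : Module.End K A) * X) ^ (d + 1)
  have hexpand : ∀ s : K, (P + s • Q)^[d + 1] f
      = ∑ i ∈ range (p.natDegree + 2), s ^ i • p.coeff i f := fun s => by
    rw [← coeFn_coe, ← Module.End.coe_pow, coe_add_linearMap, coe_smul_linearMap,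
      add_smul_pow_eq_sum_range_coeff (R := Module.End K A) (N := p.natDegree + 2) _ _ s _
        (Nat.lt_add_of_pos_right two_pos),
      LinearMap.sum_apply]
    rfl
  have hcoeff : ε (p.coeff 1 f) = 0 :=
    eq_zero_of_forall_sum_range_mul_pow_eq_zero (c := fun i => ε (p.coeff i f))
      (N := p.natDegree + 2) (fun s => by rw [← h s, hexpand, map_sum]; simp [mul_comm]) (by omega)
  have hmem := P.coeff_one_pow_succ_apply_sub_mem_pow Q hf d
  rw [Nat.add_sub_cancel_left, pow_one] at hmem
  have hzero := RingHom.mem_ker.mp hmem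
  rw [map_sub, hcoeff, zero_sub, neg_eq_zero, map_nsmul, nsmul_eq_mul] at hzero
  exact (mul_eq_zero.mp hzero).resolve_left (Nat.cast_ne_zero.mpr (Nat.succ_ne_zero d))

end Derivation

namespace AlgHom

variable {K A : Type*} [CommRing K] [CommRing A] [Algebra K A] (ε : A →ₐ[K] K)

theorem sub_algebraMap_apply_mem_ker (a : A) : a - algebraMap K A (ε a) ∈ RingHom.ker ε := by
  simp [RingHom.mem_ker]

noncomputable def toKerCotangent : A →ₗ[K] (RingHom.ker ε).Cotangent :=
  ((RingHom.ker ε).toCotangent.restrictScalars K) ∘ₗ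
    LinearMap.codRestrict ((RingHom.ker ε).restrictScalars K)
      (LinearMap.id - Algebra.linearMap K A ∘ₗ ε.toLinearMap) ε.sub_algebraMap_apply_mem_ker

theorem toKerCotangent_apply (a : A) :
    ε.toKerCotangent a = (RingHom.ker ε).toCotangent ⟨_, ε.sub_algebraMap_apply_mem_ker a⟩ :=
  rfl

theorem toKerCotangent_of_mem_ker {a : A} (ha : a ∈ RingHom.ker ε) :
    ε.toKerCotangent a = (RingHom.ker ε).toCotangent ⟨a, ha⟩ := by
  simp [toKerCotangent_apply, RingHom.mem_ker.mp ha]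

theorem toKerCotangent_mul (a b : A) :
    ε.toKerCotangent (a * b) = ε a • ε.toKerCotangent b + ε b • ε.toKerCotangent a := by
  simp only [toKerCotangent_apply, ← LinearMap.map_smul_of_tower, ← map_add, Ideal.toCotangent_eq,
    sq]
  convert Ideal.mul_mem_mul (ε.sub_algebraMap_apply_mem_ker a) (ε.sub_algebraMap_apply_mem_ker b)
    using 1
  simp only [Submodule.coe_add, Submodule.coe_smul_of_tower, map_mul, Algebra.smul_def]
  ring

theorem finite_kerCotangent (hfg : (RingHom.ker ε).FG) :
    Module.Finite K (RingHom.ker ε).Cotangent := by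
  set m := RingHom.ker ε
  have : Module.Finite A m := Module.Finite.iff_fg.mpr hfg
  have : Module.Finite A m.Cotangent := Module.Finite.of_surjective _ m.toCotangent_surjective
  have : Module.Finite (A ⧸ m) m.Cotangent := Module.Finite.of_restrictScalars_finite A _ _
  have : Module.Finite K (A ⧸ m) := Module.Finite.of_surjective (Algebra.linearMap K (A ⧸ m))
    fun x => by
      obtain ⟨a, rfl⟩ := Ideal.Quotient.mk_surjective x
      exact ⟨ε a, (Ideal.Quotient.eq.mpr (ε.sub_algebraMap_apply_mem_ker a)).symm⟩
  have : IsScalarTower K (A ⧸ m) m.Cotangent := IsScalarTower.of_algebraMap_smul fun r x => by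
    rw [← Ideal.Quotient.mk_algebraMap, ← Ideal.Quotient.algebraMap_eq, algebraMap_smul,
      algebraMap_smul]
  exact Module.Finite.trans (A ⧸ m) _

end AlgHom

/-- Coordinates `coord j` at the point `ε` together with vector fields `field j` dual to them. -/
structure TangentFrame {K A : Type*} [CommRing K] [CommRing A] [Algebra K A] (ε : A →ₐ[K] K)
    (ι : Type*) [Fintype ι] where
  coord : ι → A
  field : ι → Derivation K A A
  coord_mem_ker : ∀ j, coord j ∈ RingHom.ker ε
  sub_sum_mem_ker_sq :
    ∀ b ∈ RingHom.ker ε, b - ∑ j, ε (field j b) • coord j ∈ RingHom.ker ε ^ 2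

namespace TangentFrame

section CommRing

variable {K A : Type*} [CommRing K] [CommRing A] [Algebra K A] {ε : A →ₐ[K] K}
  {ι : Type*} [Fintype ι] (F : TangentFrame ε ι)

theorem sub_sum_coord_mul_mem_ker_sq {f : A} (hf : f ∈ RingHom.ker ε) :
    f - ∑ j, F.coord j * F.field j f ∈ RingHom.ker ε ^ 2 := by
  have hterm : ∀ j, F.coord j * F.field j f - ε (F.field j f) • F.coord j ∈ RingHom.ker ε ^ 2 := by
    intro j
    rw [Algebra.smul_def, mul_comm (algebraMap K A _), ← mul_sub, sq]
    exact Ideal.mul_mem_mul (F.coord_mem_ker j) (ε.sub_algebraMap_apply_mem_ker _)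
  convert Ideal.sub_mem _ (F.sub_sum_mem_ker_sq f hf) (Ideal.sum_mem _ fun j _ => hterm j) using 1
  rw [sum_sub_distrib]
  abel

/-- Euler's identity for homogeneous functions of degree `k`. -/
theorem nsmul_sub_sum_coord_mul_mem_pow_succ {k : ℕ} {f : A} (hf : f ∈ RingHom.ker ε ^ k) :
    k • f - ∑ j, F.coord j * F.field j f ∈ RingHom.ker ε ^ (k + 1) := by
  induction k generalizing f with
  | zero =>
    simpa using Ideal.sum_mem _ fun j _ => Ideal.mul_mem_right _ _ (F.coord_mem_ker j)
  | succ k ih =>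
    rw [pow_succ] at hf
    refine Submodule.mul_induction_on hf (fun x hx y hy => ?_) (fun x y hx hy => ?_)
    · have hleibniz : ∑ j, F.coord j * F.field j (x * y)
          = x * ∑ j, F.coord j * F.field j y + y * ∑ j, F.coord j * F.field j x := by
        simp only [Derivation.leibniz, smul_eq_mul, mul_sum, ← sum_add_distrib]
        exact sum_congr rfl fun j _ => by ring
      have hsplit : (k + 1) • (x * y) - ∑ j, F.coord j * F.field j (x * y)
          = (k • x - ∑ j, F.coord j * F.field j x) * y
            + x * (y - ∑ j, F.coord j * F.field j y) := by
        rw [hleibniz]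
        ring
      rw [hsplit]
      refine Ideal.add_mem _ ?_ ?_
      · simpa only [← pow_succ] using Ideal.mul_mem_mul (ih hx) hy
      · simpa only [← pow_add] using Ideal.mul_mem_mul hx (F.sub_sum_coord_mul_mem_ker_sq hy)
    · convert Ideal.add_mem _ hx hy using 1
      simp only [map_add, mul_add, sum_add_distrib, smul_add]
      abel

end CommRing

variable {K A : Type*} [Field K] [CharZero K] [CommRing A] [Algebra K A] {ε : A →ₐ[K] K}
  {ι : Type*} [Fintype ι] (F : TangentFrame ε ι)

theorem mem_pow_succ_of_forall_eval_iterate_eq_zero {d : ℕ} {f : A}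
    (hf : f ∈ RingHom.ker ε ^ d) (h : ∀ x : ι → K, ε ((⇑(∑ j, x j • F.field j))^[d] f) = 0) :
    f ∈ RingHom.ker ε ^ (d + 1) := by
  classical
  induction d generalizing f with
  | zero => simpa using h 0
  | succ d ih =>
    have hfield : ∀ j, F.field j f ∈ RingHom.ker ε ^ (d + 1) := by
      refine fun j => ih ((F.field j).apply_mem_pow_pred hf) fun x =>
        Derivation.eval_iterate_apply_eq_zero_of_forall_eval_iterate_add_smul ε _ _ hf fun s => ?_
      have hline : ∑ i, (x + s • Pi.single j 1 : ι → K) i • F.field i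
          = ∑ i, x i • F.field i + s • F.field j := by
        simp [add_smul, sum_add_distrib, Pi.single_apply, ite_smul]
      rw [← hline]
      exact h _
    have hsum : ∑ j, F.coord j * F.field j f ∈ RingHom.ker ε ^ (d + 1 + 1) := by
      rw [pow_succ']
      exact Ideal.sum_mem _ fun j _ => Ideal.mul_mem_mul (F.coord_mem_ker j) (hfield j)
    have hsmul := Ideal.add_mem _ (F.nsmul_sub_sum_coord_mul_mem_pow_succ hf) hsum
    rw [sub_add_cancel] at hsmul
    have hne : ((d + 1 : ℕ) : K) ≠ 0 := Nat.cast_ne_zero.mpr (Nat.succ_ne_zero d)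
    rw [← one_smul K f, ← inv_mul_cancel₀ hne, ← smul_smul, Nat.cast_smul_eq_nsmul]
    exact Submodule.smul_of_tower_mem _ _ hsmul

end TangentFrame

theorem TangentFrame.exists_of_fg {K A : Type*} [Field K] [CommRing A] [Algebra K A]
    (ε : A →ₐ[K] K) (hfg : (RingHom.ker ε).FG)
    (hlift : ∀ ξ : A →ₗ[K] K, (∀ a b, ξ (a * b) = ε a * ξ b + ε b * ξ a) →
      ∃ D : Derivation K A A, ∀ a, ε (D a) = ξ a) :
    ∃ n, Nonempty (TangentFrame ε (Fin n)) := by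
  have := ε.finite_kerCotangent hfg
  let b := Module.finBasis K (RingHom.ker ε).Cotangent
  choose e he using fun j => (RingHom.ker ε).toCotangent_surjective (b j)
  choose D hD using fun j => hlift (b.coord j ∘ₗ ε.toKerCotangent) fun x y => by
    simp only [LinearMap.comp_apply, AlgHom.toKerCotangent_mul, map_add, map_smul, smul_eq_mul]
  refine ⟨_, ⟨⟨fun j => e j, D, fun j => (e j).2, fun c hc => ?_⟩⟩⟩
  have h0 : (RingHom.ker ε).toCotangent (⟨c, hc⟩ - ∑ j, ε (D j c) • e j) = 0 := by
    simp only [hD, LinearMap.comp_apply, ε.toKerCotangent_of_mem_ker hc, map_sub, map_sum,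
      LinearMap.map_smul_of_tower, he, Module.Basis.coord_apply, b.sum_repr, sub_self]
  simpa using ((RingHom.ker ε).toCotangent_eq_zero _).mp h0

namespace Bialgebra

open Coalgebra

variable {K B : Type*} [CommRing K] [CommRing B] [Bialgebra K B]

noncomputable def contractRight (ξ : B →ₗ[K] K) : B ⊗[K] B →ₗ[K] B :=
  _root_.TensorProduct.rid K B ∘ₗ ξ.lTensor B

@[simp]
theorem contractRight_tmul (ξ : B →ₗ[K] K) (a b : B) : contractRight ξ (a ⊗ₜ b) = ξ b • a :=
  rfl

theorem contractRight_counit_comul (a : B) : contractRight (counit : B →ₗ[K] K) (comul a) = a := by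
  simp [contractRight, lTensor_counit_comul]

theorem counit_contractRight (ξ : B →ₗ[K] K) (t : B ⊗[K] B) :
    counit (contractRight ξ t) = ξ (_root_.TensorProduct.lid K B (counit.rTensor B t)) := by
  induction t with
  | zero => simp
  | tmul a b => simp [mul_comm]
  | add x y hx hy => simp only [map_add, hx, hy]

theorem contractRight_mul {ξ : B →ₗ[K] K} (hξ : ∀ a b, ξ (a * b) = counit a * ξ b + counit b * ξ a)
    (t s : B ⊗[K] B) :
    contractRight ξ (t * s) = contractRight (counit : B →ₗ[K] K) t * contractRight ξ s
      + contractRight ξ t * contractRight (counit : B →ₗ[K] K) s := by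
  induction t with
  | zero => simp
  | add x y hx hy => simp only [add_mul, map_add, hx, hy]; ring
  | tmul a b =>
    induction s with
    | zero => simp
    | add u v hu hv => simp only [mul_add, map_add, hu, hv]; ring
    | tmul c d =>
      simp only [Algebra.TensorProduct.tmul_mul_tmul, contractRight_tmul, hξ, Algebra.smul_def,
        map_add, map_mul]
      ring

/-- The left-invariant vector field `a ↦ a₍₁₎ ξ(a₍₂₎)` with value `ξ` at the identity. -/
noncomputable def invariantDerivation (ξ : B →ₗ[K] K)
    (hξ : ∀ a b, ξ (a * b) = counit a * ξ b + counit b * ξ a) : Derivation K B B :=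
  Derivation.mk' (contractRight ξ ∘ₗ comul) fun a b => by
    simp only [LinearMap.comp_apply, comul_mul, contractRight_mul hξ, contractRight_counit_comul,
      smul_eq_mul]
    ring

theorem counit_invariantDerivation (ξ : B →ₗ[K] K)
    (hξ : ∀ a b, ξ (a * b) = counit a * ξ b + counit b * ξ a) (a : B) :
    counit (invariantDerivation ξ hξ a) = ξ a := by
  simp [invariantDerivation, counit_contractRight, rTensor_counit_comul]

end Bialgebra

/-- Case `F = ℝ` of Lemma 2.2: if `A` is a commutative Hopf algebra over `ℝ`, finitely
generated as an `ℝ`-algebra, such that `ℂ ⊗[ℝ] A` is an integral domain, then `A` is a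
formally real ring. -/
theorem coordinate_ring_of_connected_real_group_is_formally_real
    (A : Type*) [CommRing A] [HopfAlgebra ℝ A] [Algebra.FiniteType ℝ A]
    [IsDomain (ℂ ⊗[ℝ] A)] :
    ∀ (n : ℕ) (f : Fin n → A), (∑ i, f i ^ 2) = 0 → ∀ i, f i = 0 := by
  intro n f hsum i
  have : IsDomain A :=
    (Algebra.TensorProduct.includeRight_injective (A := ℂ) (algebraMap ℝ ℂ).injective).isDomain _
  have : IsNoetherianRing A := Algebra.FiniteType.isNoetherianRing ℝ A
  let ε := Bialgebra.counitAlgHom ℝ A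
  obtain ⟨N, ⟨F⟩⟩ := TangentFrame.exists_of_fg ε (IsNoetherian.noetherian _) fun ξ hξ =>
    ⟨Bialgebra.invariantDerivation ξ hξ, Bialgebra.counit_invariantDerivation ξ hξ⟩
  have hmem : ∀ d j, f j ∈ RingHom.ker ε ^ d := by
    intro d
    induction d with
    | zero => simp
    | succ d ih =>
      exact fun j => F.mem_pow_succ_of_forall_eval_iterate_eq_zero (ih j) fun x =>
        Derivation.eval_iterate_eq_zero_of_sum_sq_eq_zero ε _ ih hsum j
  have hi : f i ∈ ⨅ d, RingHom.ker ε ^ d := Submodule.mem_iInf _ |>.mpr (hmem · i)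
  rwa [Ideal.iInf_pow_eq_bot_of_isDomain _ (RingHom.ker_ne_top ε), Ideal.mem_bot] at hi
end

section
/- Let G be a group, let σ : G → G be a group homomorphism with σ ∘ σ = id, and let Z be a subgroup of G contained in the center of G, stable under σ, and such that the only element z ∈ Z with σ(z) = z is z = 1. Then every a ∈ G with a·σ(a) ∈ Z satisfies a·σ(a) = 1. (Consequently, every 1-cocycle for G/Z lifts to a 1-cocycle for G, i.e., the map H¹({1,σ}, G) → H¹({1,σ}, G/Z) is surjective.) -/
/-- Surjectivity half of Example (3), Section 3: let `G` be a group with an involutive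
endomorphism `σ` and let `Z` be a central, `σ`-stable subgroup whose only `σ`-fixed element
is `1`.  Then any `a ∈ G` with `a * σ a ∈ Z` satisfies `a * σ a = 1`; consequently every
1-cocycle for `G ⧸ Z` lifts to a 1-cocycle for `G`. -/
theorem cocycle_lifts_of_central_subgroup
    {G : Type*} [Group G] (σ : G →* G) (hσ : ∀ g : G, σ (σ g) = g)
    (Z : Subgroup G) (hZ : Z ≤ Subgroup.center G)
    (hstab : ∀ z ∈ Z, σ z ∈ Z)
    (hfix : ∀ z ∈ Z, σ z = z → z = 1) :
    ∀ a : G, a * σ a ∈ Z → a * σ a = 1 := by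
  intro a hz
  apply hfix _ hz
  have hc : a * σ a = σ a * a := by
    have h := Subgroup.mem_center_iff.mp (hZ hz) a
    exact mul_left_cancel (a := a) (by rw [h]; group)
  calc σ (a * σ a) = σ a * a := by rw [map_mul, hσ]
    _ = a * σ a := hc.symm
end

section
/- Let G be a group, σ : G → G a group homomorphism with σ ∘ σ = id, and Z a subgroup of G contained in the center of G and stable under σ, such that: (i) the only element z ∈ Z with σ(z) = z is z = 1, and (ii) every x ∈ Z with x·σ(x) = 1 can be written as x = y⁻¹·σ(y) for some y ∈ Z. Let σ̄ denote the induced endomorphism of the quotient group G/Z. Then the map induced by the projection G → G/Z, from the set {a ∈ G | a·σ(a) = 1} modulo the equivalence a ~ g⁻¹·a·σ(g) (g ∈ G), to the set {ā ∈ G/Z | ā·σ̄(ā) = 1} modulo the equivalence ā ~ ḡ⁻¹·ā·σ̄(ḡ) (ḡ ∈ G/Z), is a bijection. -/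
/-- Example (3), Section 3: let `G` be a group with an involutive endomorphism `σ` and `Z` a
central `σ`-stable subgroup such that (i) `1` is the only `σ`-fixed element of `Z` and
(ii) every 1-cocycle with values in `Z` is a coboundary in `Z`.  Then the map
`H¹({1,σ}, G) → H¹({1,σ}, G ⧸ Z)` induced by the projection — from 1-cocycles
`{a ∈ G | a · σ a = 1}` modulo `a ~ g⁻¹ · a · σ g`, to 1-cocycles for `G ⧸ Z` modulo the
analogous equivalence for the induced endomorphism `σ̄` — is a bijection. -/
theorem h1_map_to_quotient_bijective
    {G : Type*} [Group G] (σ : G →* G) (hσ : ∀ g : G, σ (σ g) = g)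
    (Z : Subgroup G) [Z.Normal] (hZ : Z ≤ Subgroup.center G)
    (hstab : ∀ z ∈ Z, σ z ∈ Z)
    (hfix : ∀ z ∈ Z, σ z = z → z = 1)
    (hcob : ∀ x ∈ Z, x * σ x = 1 → ∃ y ∈ Z, x = y⁻¹ * σ y)
    (σbar : G ⧸ Z →* G ⧸ Z)
    (hσbar : ∀ g : G, σbar (QuotientGroup.mk g) = QuotientGroup.mk (σ g)) :
    ∃ F : Quot (fun a b : {a : G // a * σ a = 1} =>
            ∃ g : G, (b : G) = g⁻¹ * (a : G) * σ g) →
          Quot (fun a b : {a : G ⧸ Z // a * σbar a = 1} =>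
            ∃ g : G ⧸ Z, (b : G ⧸ Z) = g⁻¹ * (a : G ⧸ Z) * σbar g),
      (∀ (a : {a : G // a * σ a = 1}) (b : {a : G ⧸ Z // a * σbar a = 1}),
          (b : G ⧸ Z) = QuotientGroup.mk (a : G) →
          F (Quot.mk _ a) = Quot.mk _ b) ∧
      Function.Bijective F := by
  classical
  set r : {a : G // a * σ a = 1} → {a : G // a * σ a = 1} → Prop :=
    fun a b => ∃ g : G, (b : G) = g⁻¹ * (a : G) * σ g with hr
  set r' : {a : G ⧸ Z // a * σbar a = 1} → {a : G ⧸ Z // a * σbar a = 1} → Prop :=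
    fun a b => ∃ g : G ⧸ Z, (b : G ⧸ Z) = g⁻¹ * (a : G ⧸ Z) * σbar g with hr'
  -- commuting with central elements
  have hcomm : ∀ z ∈ Z, ∀ g : G, z * g = g * z := fun z hz g =>
    (Subgroup.mem_center_iff.mp (hZ hz) g).symm
  -- r' is an equivalence relation
  have hequiv : Equivalence r' := by
    constructor
    · intro a; exact ⟨1, by simp⟩
    · rintro a b ⟨g, hg⟩
      refine ⟨g⁻¹, ?_⟩
      rw [hg, map_inv]; group
    · rintro a b c ⟨g, hg⟩ ⟨g', hg'⟩
      refine ⟨g * g', ?_⟩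
      rw [hg', hg, map_mul]; group
  -- the pushforward of a cocycle is a cocycle
  have hcoc : ∀ a : {a : G // a * σ a = 1},
      (QuotientGroup.mk a.1 : G ⧸ Z) * σbar (QuotientGroup.mk a.1) = 1 := by
    intro a
    rw [hσbar, ← QuotientGroup.mk_mul, a.2, QuotientGroup.mk_one]
  refine ⟨Quot.lift (fun a => Quot.mk r' ⟨QuotientGroup.mk a.1, hcoc a⟩) ?_, ?_, ?_, ?_⟩
  · rintro a b ⟨g, hg⟩
    apply Quot.sound
    refine ⟨QuotientGroup.mk g, ?_⟩
    show (QuotientGroup.mk b.1 : G ⧸ Z) = _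
    rw [hg, hσbar]
    simp
  · intro a b hb
    have : b = ⟨QuotientGroup.mk a.1, hcoc a⟩ := Subtype.ext hb
    rw [this]
  · -- injectivity
    intro x y
    induction x using Quot.ind with | _ a =>
    induction y using Quot.ind with | _ b =>
    intro h
    have h' : r' ⟨QuotientGroup.mk a.1, hcoc a⟩ ⟨QuotientGroup.mk b.1, hcoc b⟩ :=
      hequiv.eqvGen_iff.mp (Quot.eq.mp h)
    obtain ⟨gbar, hg⟩ := h'
    obtain ⟨g, rfl⟩ := QuotientGroup.mk_surjective gbar
    simp only [hσbar] at hg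
    have hg2 : (QuotientGroup.mk b.1 : G ⧸ Z) = QuotientGroup.mk (g⁻¹ * a.1 * σ g) := by
      rw [hg]; simp
    -- b = c * x with c the twisted cocycle and x ∈ Z
    set c : G := g⁻¹ * a.1 * σ g with hc
    have hx : c⁻¹ * b.1 ∈ Z := (QuotientGroup.eq).mp hg2.symm
    set x : G := c⁻¹ * b.1 with hxdef
    have hbx : b.1 = c * x := by rw [hxdef]; group
    have hccoc : c * σ c = 1 := by
      have := a.2
      simp only [hc, map_mul, map_inv]
      calc g⁻¹ * a.1 * σ g * ((σ g)⁻¹ * σ a.1 * σ (σ g))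
          = g⁻¹ * (a.1 * σ a.1) * g := by rw [hσ]; group
        _ = 1 := by rw [a.2]; group
    have hxcoc : x * σ x = 1 := by
      have hb := b.2
      rw [hbx, map_mul] at hb
      have key : c * x * (σ c * σ x) = x * σ x := by
        calc c * x * (σ c * σ x) = c * (x * σ c) * σ x := by group
          _ = c * (σ c * x) * σ x := by rw [hcomm x hx (σ c)]
          _ = (c * σ c) * (x * σ x) := by group
          _ = x * σ x := by rw [hccoc, one_mul]
      rw [key] at hb
      exact hb
    obtain ⟨y, hy, hxy⟩ := hcob x hx hxcoc
    apply Quot.sound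
    refine ⟨g * y, ?_⟩
    rw [hbx, hxy, map_mul, mul_inv_rev]
    calc c * (y⁻¹ * σ y) = y⁻¹ * c * σ y := by
          rw [← mul_assoc, hcomm y⁻¹ (inv_mem hy) c]
      _ = y⁻¹ * g⁻¹ * a.1 * (σ g * σ y) := by rw [hc]; group
  · -- surjectivity
    intro x
    induction x using Quot.ind with | _ b =>
    obtain ⟨a, ha⟩ := QuotientGroup.mk_surjective b.1
    set z : G := a * σ a with hzdef
    have hzZ : z ∈ Z := by
      rw [← QuotientGroup.eq_one_iff]
      show (QuotientGroup.mk (a * σ a) : G ⧸ Z) = 1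
      rw [QuotientGroup.mk_mul, ← hσbar, ha]
      exact b.2
    have h1 : σ z = σ a * a := by rw [hzdef, map_mul, hσ]
    have h2 : a * σ z = z * a := by rw [h1, hzdef]; group
    have h3 : σ z * a = a * σ z := hcomm (σ z) (hstab z hzZ) a
    have h4 : σ z = z := mul_right_cancel (h3.trans h2)
    have hz1 : a * σ a = 1 := hfix z hzZ h4
    exact ⟨Quot.mk r ⟨a, hz1⟩, congrArg (Quot.mk r') (Subtype.ext ha)⟩
end

section
/- Let K = ℝ(z) be the field of rational functions in one variable over ℝ, and consider two K-algebra structures on the rational function field ℝ(t): the first via the ℝ-algebra embedding ι₁ : K → ℝ(t) determined by z ↦ t², and the second via the ℝ-algebra embedding ι₂ : K → ℝ(t) determined by z ↦ −t². Then there is no ring homomorphism φ : ℝ(t) → ℝ(t) with φ ∘ ι₁ = ι₂; in particular the two K-field extensions L₁ = (ℝ(t), ι₁) and L₂ = (ℝ(t), ι₂) are not isomorphic as field extensions of K. -/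
lemma no_sqrt_neg_X_sq (f : RatFunc ℝ) : f ^ 2 ≠ -(RatFunc.X ^ 2) := by
  intro hf
  have hd : f.denom ≠ 0 := f.denom_ne_zero
  have key : algebraMap (Polynomial ℝ) (RatFunc ℝ) (f.num ^ 2)
      = algebraMap (Polynomial ℝ) (RatFunc ℝ) (-(Polynomial.X ^ 2 * f.denom ^ 2)) := by
    have hnum : algebraMap (Polynomial ℝ) (RatFunc ℝ) f.num
        = f * algebraMap (Polynomial ℝ) (RatFunc ℝ) f.denom := by
      have h := f.num_div_denom
      rw [div_eq_iff (RatFunc.algebraMap_ne_zero hd)] at h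
      exact h
    push_cast [map_neg, map_mul, map_pow, RatFunc.algebraMap_X, hnum]
    linear_combination (algebraMap (Polynomial ℝ) (RatFunc ℝ) f.denom) ^ 2 * hf
  have hpoly : f.num ^ 2 = -(Polynomial.X ^ 2 * f.denom ^ 2) :=
    RatFunc.algebraMap_injective ℝ key
  have hlc := congrArg Polynomial.leadingCoeff hpoly
  rw [Polynomial.leadingCoeff_pow, Polynomial.leadingCoeff_neg, Polynomial.leadingCoeff_mul,
    Polynomial.leadingCoeff_pow, Polynomial.leadingCoeff_pow, Polynomial.leadingCoeff_X] at hlc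
  have hdl : f.denom.leadingCoeff ≠ 0 := Polynomial.leadingCoeff_ne_zero.mpr hd
  have hpos : (0:ℝ) < f.denom.leadingCoeff ^ 2 := by positivity
  nlinarith [sq_nonneg f.num.leadingCoeff]

/-- Remark 1.2: for `K = ℝ(z)`, the two `K`-field structures on `ℝ(t)` given by the
`ℝ`-algebra embeddings `ι₁ : z ↦ t²` and `ι₂ : z ↦ -t²` (the real Picard-Vessiot fields
`K(√z)` and `K(√-z)` for `y' = y/(2z)`) are not isomorphic over `K`: there is no ring
homomorphism `φ : ℝ(t) → ℝ(t)` with `φ ∘ ι₁ = ι₂`. -/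
theorem real_picard_vessiot_fields_not_isomorphic
    (ι₁ ι₂ : RatFunc ℝ →ₐ[ℝ] RatFunc ℝ)
    (h₁ : ι₁ RatFunc.X = RatFunc.X ^ 2)
    (h₂ : ι₂ RatFunc.X = -(RatFunc.X ^ 2)) :
    ¬ ∃ φ : RatFunc ℝ →+* RatFunc ℝ, ∀ x : RatFunc ℝ, φ (ι₁ x) = ι₂ x := by
  rintro ⟨φ, hφ⟩
  have := hφ RatFunc.X
  rw [h₁, h₂, map_pow] at this
  exact no_sqrt_neg_X_sq _ this
end

section
/- Fix n ≥ 1 and let J denote the standard 2n × 2n symplectic form matrix. Let A be a 2n × 2n complex matrix in the symplectic group (i.e., Aᵀ J A = J) with A · Ā = 1, where Ā denotes the entrywise complex conjugate of A. Then there exists a 2n × 2n complex matrix B with Bᵀ J B = J such that A = B⁻¹ · B̄. -/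
/-!
The cocycle `A` is first split in `GL₂ₙ(ℂ)`: the matrices `C = (1 + Ā) + s i (1 - Ā)` satisfy
`C̄ = C A`, and `det C`, a polynomial in `s` which is nonzero at `s = i` (where `C = 2Ā`), is
nonzero for some real `s`. Since `A` is symplectic, the alternating form `N = C⁻ᵀ J C⁻¹` is then
fixed by conjugation, i.e. real. A nondegenerate real alternating form has a symplectic basis, so
`N = Rᵀ J R` with `R` real, and `B = R C` is symplectic with `B̄ = R C A = B A`.
-/

open Matrix

namespace LinearMap.BilinForm

variable {K V : Type*} [Field K] [AddCommGroup V] [Module K V] {B : LinearMap.BilinForm K V}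

theorem exists_apply_eq_one [Nontrivial V] (hB : B.SeparatingLeft) : ∃ x y, B x y = 1 := by
  obtain ⟨x, hx⟩ := exists_ne (0 : V)
  obtain ⟨y, hy⟩ : ∃ y, B x y ≠ 0 := by
    by_contra! h
    exact hx (hB x h)
  exact ⟨x, (B x y)⁻¹ • y, by rw [map_smul, smul_eq_mul, inv_mul_cancel₀ hy]⟩

variable {e f : V}

theorem finrank_ker_inf_ker_add_two [FiniteDimensional K V] (hB : B.IsAlt) (hfe : B f e = 1) :
    Module.finrank K ↥(ker (B e) ⊓ ker (B f)) + 2 = Module.finrank K V := by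
  have hef : B e f = -1 := by rw [← hB.neg_eq, hfe]
  have hsurj : Function.Surjective ((B e).prod (B f)) := fun ⟨a, b⟩ =>
    ⟨b • e - a • f, by simp [hB.self_eq_zero, hef, hfe]⟩
  rw [← ker_prod, ← finrank_range_add_finrank_ker ((B e).prod (B f)), range_eq_top.2 hsurj,
    finrank_top, Module.finrank_prod, Module.finrank_self, add_comm]

theorem separatingLeft_restrict_ker_inf_ker (hB : B.IsAlt) (hsep : B.SeparatingLeft)
    (hfe : B f e = 1) : (B.restrict (ker (B e) ⊓ ker (B f))).SeparatingLeft := by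
  have hef : B e f = -1 := by rw [← hB.neg_eq, hfe]
  rintro ⟨w, hwe, hwf⟩ hw
  ext
  refine hsep w fun x => ?_
  have hproj : x - B f x • e + B e x • f ∈ ker (B e) ⊓ ker (B f) :=
    ⟨by simp [hB.self_eq_zero, hef], by simp [hB.self_eq_zero, hfe]⟩
  have hwe' : B w e = 0 := hB.eq_iff.1 hwe
  have hwf' : B w f = 0 := hB.eq_iff.1 hwf
  have := hw ⟨_, hproj⟩
  simp_all

theorem exists_apply_apply_eq_J [FiniteDimensional K V] (hB : B.IsAlt) (hsep : B.SeparatingLeft)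
    {m : ℕ} (hm : Module.finrank K V = 2 * m) :
    ∃ b : Fin m ⊕ Fin m → V, ∀ i j, B (b i) (b j) = J (Fin m) K i j := by
  induction m generalizing V with
  | zero =>
    exact ⟨isEmptyElim, isEmptyElim⟩
  | succ m ih =>
    have : Nontrivial V := Module.nontrivial_of_finrank_pos (R := K) (by omega)
    obtain ⟨f, e, hfe⟩ := exists_apply_eq_one hsep
    have hef : B e f = -1 := by rw [← hB.neg_eq, hfe]
    have hW := finrank_ker_inf_ker_add_two hB hfe
    obtain ⟨b, hb⟩ := ih (B := B.restrict (ker (B e) ⊓ ker (B f))) (fun w => hB w)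
      (separatingLeft_restrict_ker_inf_ker hB hsep hfe) (by omega)
    have hWe (w : ↥(ker (B e) ⊓ ker (B f))) : B e w = 0 := w.2.1
    have hWf (w : ↥(ker (B e) ⊓ ker (B f))) : B f w = 0 := w.2.2
    have heW (w : ↥(ker (B e) ⊓ ker (B f))) : B w e = 0 := hB.eq_iff.1 w.2.1
    have hfW (w : ↥(ker (B e) ⊓ ker (B f))) : B w f = 0 := hB.eq_iff.1 w.2.2
    have hbW (i j) : B (b i : V) (b j) = J (Fin m) K i j := hb i j
    refine ⟨Sum.elim (Fin.cons e fun i => b (.inl i)) (Fin.cons f fun i => b (.inr i)), ?_⟩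
    rintro (i | i) (j | j) <;> refine Fin.cases ?_ (fun i => ?_) i <;>
      refine Fin.cases ?_ (fun j => ?_) j <;>
      simp [hB.self_eq_zero, hfe, hef, hWe, hWf, heW, hfW, hbW, J, one_apply,
        (Fin.succ_ne_zero _).symm]

end LinearMap.BilinForm

open Polynomial in
theorem Polynomial.exists_ofReal_eval_ne_zero {p : ℂ[X]} (hp : p ≠ 0) :
    ∃ s : ℝ, p.eval (s : ℂ) ≠ 0 := by
  by_contra! h
  refine hp (p.eq_zero_of_infinite_isRoot ?_)
  exact (Set.infinite_range_of_injective Complex.ofReal_injective).mono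
    (by rintro _ ⟨s, rfl⟩; exact h s)

namespace Matrix

theorem dotProduct_mulVec_self_eq_zero_of_transpose_eq_neg {ι R : Type*} [Fintype ι] [CommRing R]
    [IsAddTorsionFree R] {N : Matrix ι ι R} (hN : Nᵀ = -N) (x : ι → R) : x ⬝ᵥ N *ᵥ x = 0 := by
  refine self_eq_neg.1 ?_
  calc x ⬝ᵥ N *ᵥ x = x ⬝ᵥ Nᵀ *ᵥ x := by rw [dotProduct_mulVec, ← mulVec_transpose, dotProduct_comm]
    _ = -(x ⬝ᵥ N *ᵥ x) := by rw [hN, neg_mulVec, dotProduct_neg]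

theorem exists_transpose_mul_J_mul_eq {K : Type*} [Field K] {n : ℕ} {N : Matrix (Fin n ⊕ Fin n) (Fin n ⊕ Fin n) K}
    (hN : ∀ x, x ⬝ᵥ N *ᵥ x = 0) (hdet : N.det ≠ 0) :
    ∃ R, Rᵀ * J (Fin n) K * R = N := by
  obtain ⟨b, hb⟩ := LinearMap.BilinForm.exists_apply_apply_eq_J (B := toLinearMap₂' K N)
    (fun x => by simpa [toLinearMap₂'_apply'] using hN x)
    (LinearMap.separatingLeft_toLinearMap₂'_iff_det_ne_zero.2 hdet) (m := n)
    (by rw [Module.finrank_fintype_fun_eq_card, Fintype.card_sum, Fintype.card_fin, two_mul])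
  set P := (of b)ᵀ
  have hP : Pᵀ * N * P = J (Fin n) K := by
    ext i j
    rw [← hb, mul_mul_apply, toLinearMap₂'_apply']
    rfl
  have hPdet : IsUnit P.det := by
    have h := congrArg det hP
    rw [det_mul, det_mul, det_transpose] at h
    exact isUnit_of_mul_isUnit_right (h ▸ isUnit_det_J (Fin n) K)
  refine ⟨P⁻¹, ?_⟩
  rw [← hP, transpose_nonsing_inv, Matrix.mul_assoc, Matrix.mul_assoc, mul_nonsing_inv _ hPdet,
    mul_one, ← Matrix.mul_assoc, nonsing_inv_mul _ (by rwa [det_transpose]), one_mul]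

section

variable {ι : Type*} [Fintype ι] [DecidableEq ι]

open Polynomial in
theorem exists_ofReal_det_add_smul_ne_zero {M₀ M₁ : Matrix ι ι ℂ} {z : ℂ}
    (hz : (M₀ + z • M₁).det ≠ 0) : ∃ s : ℝ, (M₀ + (s : ℂ) • M₁).det ≠ 0 := by
  set p : ℂ[X] := (M₀.map C + (X : ℂ[X]) • M₁.map C).det
  have hp (w : ℂ) : p.eval w = (M₀ + w • M₁).det := by
    rw [← coe_evalRingHom, RingHom.map_det]
    congr 1
    ext i j
    simp [mul_comm w]
  obtain ⟨s, hs⟩ := exists_ofReal_eval_ne_zero (p := p) (by rintro h0; simp [← hp, h0] at hz)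
  exact ⟨s, by rwa [← hp]⟩

theorem exists_isUnit_det_map_conj_eq_mul {A : Matrix ι ι ℂ}
    (hA : A * A.map (starRingEnd ℂ) = 1) :
    ∃ C : Matrix ι ι ℂ, IsUnit C.det ∧ C.map (starRingEnd ℂ) = C * A := by
  set Ā := A.map (starRingEnd ℂ)
  have hĀA : Ā * A = 1 := mul_eq_one_comm.1 hA
  have hĀ : IsUnit Ā.det := isUnit_det_of_left_inverse hA
  have hI : 1 + Ā + Complex.I • Complex.I • (1 - Ā) = (2 : ℂ) • Ā := by
    rw [smul_smul, Complex.I_mul_I, neg_one_smul, two_smul]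
    abel
  obtain ⟨s, hs⟩ := exists_ofReal_det_add_smul_ne_zero (M₀ := 1 + Ā) (M₁ := Complex.I • (1 - Ā))
    (z := Complex.I) (by rw [hI, det_smul]; exact mul_ne_zero (by simp) hĀ.ne_zero)
  rw [smul_smul] at hs
  refine ⟨_, isUnit_iff_ne_zero.2 hs, ?_⟩
  have hconj : (1 + Ā + ((s : ℂ) * Complex.I) • (1 - Ā)).map (starRingEnd ℂ) =
      1 + A - ((s : ℂ) * Complex.I) • (1 - A) := by
    ext i j
    by_cases h : i = j
    · simp [Ā, h]; ring
    · simp [Ā, h]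
  rw [hconj, add_mul, add_mul, smul_mul, sub_mul, one_mul, hĀA]
  module

end

theorem map_conj_transpose_inv_mul_J_mul_inv {l : Type*} [Fintype l] [DecidableEq l]
    {A C : Matrix (l ⊕ l) (l ⊕ l) ℂ} (hA : Aᵀ * J l ℂ * A = J l ℂ) (hC : IsUnit C.det)
    (hCA : C.map (starRingEnd ℂ) = C * A) :
    ((C⁻¹)ᵀ * J l ℂ * C⁻¹).map (starRingEnd ℂ) = (C⁻¹)ᵀ * J l ℂ * C⁻¹ := by
  have hCinv : (C⁻¹).map (starRingEnd ℂ) = A⁻¹ * C⁻¹ := by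
    rw [← mul_inv_rev, ← hCA]
    refine (inv_eq_left_inv ?_).symm
    rw [← Matrix.map_mul, nonsing_inv_mul _ hC, Matrix.map_one _ (map_zero _) (map_one _)]
  have hAsymp : A ∈ symplecticGroup l ℂ := SymplecticGroup.mem_iff'.2 hA
  have hAinv : (A⁻¹)ᵀ * J l ℂ * A⁻¹ = J l ℂ := by
    rw [← SymplecticGroup.mem_iff', ← SymplecticGroup.coe_inv' ⟨A, hAsymp⟩]
    exact Subtype.prop _
  rw [Matrix.map_mul, Matrix.map_mul, transpose_map, map_J, hCinv, transpose_mul]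
  calc (C⁻¹)ᵀ * (A⁻¹)ᵀ * J l ℂ * (A⁻¹ * C⁻¹) = (C⁻¹)ᵀ * ((A⁻¹)ᵀ * J l ℂ * A⁻¹) * C⁻¹ := by
        simp only [Matrix.mul_assoc]
    _ = (C⁻¹)ᵀ * J l ℂ * C⁻¹ := by rw [hAinv]

theorem exists_real_transpose_mul_J_mul_eq {n : ℕ}
    {N : Matrix (Fin n ⊕ Fin n) (Fin n ⊕ Fin n) ℂ} (hreal : N.map (starRingEnd ℂ) = N)
    (hskew : Nᵀ = -N) (hdet : N.det ≠ 0) :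
    ∃ R, R.map (starRingEnd ℂ) = R ∧ Rᵀ * J (Fin n) ℂ * R = N := by
  set N₀ := N.map Complex.re
  have hN₀ : N₀.map Complex.ofRealHom = N := by
    ext i j
    exact Complex.conj_eq_iff_re.1 (congr_fun₂ hreal i j)
  have hskew₀ : N₀ᵀ = -N₀ := by
    rw [← transpose_map, hskew]
    ext
    simp [N₀]
  have hdet₀ : N₀.det ≠ 0 := by
    intro h
    apply hdet
    rw [← hN₀, ← RingHom.mapMatrix_apply, ← RingHom.map_det, h, map_zero]
  obtain ⟨R₀, hR₀⟩ := exists_transpose_mul_J_mul_eq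
    (dotProduct_mulVec_self_eq_zero_of_transpose_eq_neg hskew₀) hdet₀
  refine ⟨R₀.map Complex.ofRealHom, by ext; simp, ?_⟩
  rw [← hN₀, ← hR₀, Matrix.map_mul, Matrix.map_mul, transpose_map, map_J]

end Matrix

theorem h1_sp_2n_complex_trivial_general (n : ℕ)
    (A : Matrix (Fin n ⊕ Fin n) (Fin n ⊕ Fin n) ℂ)
    (hsymp : Aᵀ * Matrix.J (Fin n) ℂ * A = Matrix.J (Fin n) ℂ)
    (hA : A * A.map (starRingEnd ℂ) = 1) :
    ∃ B : Matrix (Fin n ⊕ Fin n) (Fin n ⊕ Fin n) ℂ,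
      Bᵀ * Matrix.J (Fin n) ℂ * B = Matrix.J (Fin n) ℂ ∧
      A = B⁻¹ * B.map (starRingEnd ℂ) := by
  obtain ⟨C, hC, hCA⟩ := exists_isUnit_det_map_conj_eq_mul hA
  have hskew : ((C⁻¹)ᵀ * J (Fin n) ℂ * C⁻¹)ᵀ = -((C⁻¹)ᵀ * J (Fin n) ℂ * C⁻¹) := by
    simp [transpose_mul, J_transpose, Matrix.mul_assoc]
  have hdet : ((C⁻¹)ᵀ * J (Fin n) ℂ * C⁻¹).det ≠ 0 := by
    simp [det_mul, (isUnit_det_J (Fin n) ℂ).ne_zero, hC.ne_zero]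
  obtain ⟨R, hR, hRN⟩ := exists_real_transpose_mul_J_mul_eq
    (map_conj_transpose_inv_mul_J_mul_inv hsymp hC hCA) hskew hdet
  have hB : (R * C)ᵀ * J (Fin n) ℂ * (R * C) = J (Fin n) ℂ :=
    calc (R * C)ᵀ * J (Fin n) ℂ * (R * C) = Cᵀ * (Rᵀ * J (Fin n) ℂ * R) * C := by
          simp only [transpose_mul, Matrix.mul_assoc]
      _ = (C⁻¹ * C)ᵀ * J (Fin n) ℂ * (C⁻¹ * C) := by
          rw [hRN, transpose_mul]
          simp only [Matrix.mul_assoc]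
      _ = J (Fin n) ℂ := by rw [nonsing_inv_mul _ hC, transpose_one, one_mul, mul_one]
  refine ⟨R * C, hB, ?_⟩
  have hBdet := SymplecticGroup.symplectic_det (SymplecticGroup.mem_iff'.2 hB)
  rw [Matrix.map_mul, hR, hCA, ← Matrix.mul_assoc R, nonsing_inv_mul_cancel_left _ A hBdet]

/-- Triviality of `H¹({1,σ}, Sp(2n, ℂ))` (Example (2), Section 3): any symplectic matrix
`A` (i.e. `Aᵀ J A = J` for the standard symplectic form matrix `J`) with `A · Ā = 1`
(where `Ā` is the entrywise complex conjugate) is of the form `A = B⁻¹ · B̄` for some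
symplectic matrix `B`. -/
theorem h1_sp_2n_complex_trivial (n : ℕ) (hn : 1 ≤ n)
    (A : Matrix (Fin n ⊕ Fin n) (Fin n ⊕ Fin n) ℂ)
    (hsymp : Aᵀ * Matrix.J (Fin n) ℂ * A = Matrix.J (Fin n) ℂ)
    (hA : A * A.map (starRingEnd ℂ) = 1) :
    ∃ B : Matrix (Fin n ⊕ Fin n) (Fin n ⊕ Fin n) ℂ,
      Bᵀ * Matrix.J (Fin n) ℂ * B = Matrix.J (Fin n) ℂ ∧
      A = B⁻¹ * B.map (starRingEnd ℂ) :=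
  h1_sp_2n_complex_trivial_general n A hsymp hA
end
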